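/- Every prime (P5, complement-of-P5)-free graph is either isomorphic to C5 or contains no induced C5. -/

import Mathlib

namespace SimpleGraph

variable {V W : Type*}

/-- Seidel complement of `G` at vertex `v`. -/
def seidel (G : SimpleGraph V) (v : V) : SimpleGraph V where
  Adj x y := Xor' (G.Adj x y)
    ((G.Adj v x ∧ ¬ G.Adj v y ∧ y ≠ v) ∨ (G.Adj v y ∧ ¬ G.Adj v x ∧ x ≠ v))
  symm := by
    constructor
    intro x y h
    unfold Xor' Xor at h ⊢
    have hc := G.adj_comm x y
    tauto
  loopless := by
    constructor
    intro x h
    unfold Xor' Xor at h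
    simp only [G.irrefl] at h
    tauto

/-- A module (homogeneous set in the weak sense) of a graph. -/
def IsModule (G : SimpleGraph V) (M : Set V) : Prop :=
  ∀ x ∉ M, (∀ y ∈ M, G.Adj x y) ∨ (∀ y ∈ M, ¬ G.Adj x y)

/-- A graph is prime w.r.t. modular decomposition. -/
def IsPrime (G : SimpleGraph V) [Fintype V] : Prop :=
  3 ≤ Fintype.card V ∧
    ∀ M : Set V, G.IsModule M → M = ∅ ∨ (∃ x, M = {x}) ∨ M = Set.univ

/-- `G` has no induced subgraph isomorphic to `H`. -/
def IndFree (G : SimpleGraph V) (H : SimpleGraph W) : Prop :=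
  IsEmpty (H ↪g G)

/-- The bull: triangle 0,1,2 with pendant vertices 3 (at 0) and 4 (at 1). -/
def bull : SimpleGraph (Fin 5) :=
  SimpleGraph.fromRel (fun x y =>
    (x, y) ∈ [((0 : Fin 5), (1 : Fin 5)), (1, 2), (0, 2), (0, 3), (1, 4)])

/-- The house: complement of the path on 5 vertices. -/
def house : SimpleGraph (Fin 5) := (pathGraph 5)ᶜ

/-- `G` is (P5, House, Bull)-free. -/
def PHBFree (G : SimpleGraph V) : Prop :=
  G.IndFree (pathGraph 5) ∧ G.IndFree house ∧ G.IndFree bull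

/-- The half graph: `b i` adjacent to `w j` iff `i + j ≤ m + 1` (1-based). -/
def halfGraph (m : ℕ) : SimpleGraph (Fin m ⊕ Fin m) :=
  SimpleGraph.fromRel (fun x y =>
    match x, y with
    | Sum.inl i, Sum.inr j => i.val + j.val < m
    | _, _ => False)

/-- A buoy partition of a set of vertices. -/
def IsBuoy (G : SimpleGraph V) (A : Fin 5 → Set V) : Prop :=
  (∀ i, (A i).Nonempty) ∧
  (∀ i j, i ≠ j → Disjoint (A i) (A j)) ∧
  (∀ i, ∀ x ∈ A i, ∀ y ∈ A (i + 1), G.Adj x y) ∧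
  (∀ i j, i ≠ j → j ≠ i + 1 → i ≠ j + 1 → ∀ x ∈ A i, ∀ y ∈ A j, ¬ G.Adj x y) ∧
  (∀ B : Fin 5 → Set V,
    ((∀ i j, i ≠ j → Disjoint (B i) (B j)) ∧
     (∀ i, ∀ x ∈ B i, ∀ y ∈ B (i + 1), G.Adj x y) ∧
     (∀ i j, i ≠ j → j ≠ i + 1 → i ≠ j + 1 → ∀ x ∈ B i, ∀ y ∈ B j, ¬ G.Adj x y) ∧
     (∀ i, A i ⊆ B i)) → B = A)

end SimpleGraph

/-!
Grow an induced `C₅` into a maximal blowup `B₀, …, B₄`: disjoint nonempty classes with `Bᵢ`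
complete to `Bᵢ₊₁` and anticomplete to `Bᵢ₊₂`. Without induced `P₅` and house, a vertex outside
an induced `C₅` `c` sees on it nothing, everything, or the two neighbours of some `cᵢ` but not
the other two. Exchanging one vertex of a transversal within its class changes this pattern in
one place only, which forces a vertex of the first two kinds to see whole classes uniformly and
lets one of the last kind join `Bᵢ`. So the union of a maximal blowup is a module; in a prime
graph it is everything, and then every class, itself a module, is a single vertex.
-/

theorem Set.iUnion_update_insert {ι α : Type*} [DecidableEq ι] (B : ι → Set α) (i : ι) (v : α) :
    ⋃ j, Function.update B i (insert v (B i)) j = insert v (⋃ j, B j) := by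
  ext z
  simp only [Set.mem_iUnion, Set.mem_insert_iff, Function.update_apply]
  constructor
  · rintro ⟨j, hj⟩
    split_ifs at hj with hji
    · exact hj.imp_right fun h => ⟨i, h⟩
    · exact Or.inr ⟨j, hj⟩
  · rintro (rfl | ⟨j, hj⟩)
    · exact ⟨i, by simp⟩
    · refine ⟨j, ?_⟩
      split_ifs with hji
      · exact Or.inr (hji ▸ hj)
      · exact hj

namespace SimpleGraph

open Function Set

variable {V : Type*} {G : SimpleGraph V}

instance (n : ℕ) : DecidableRel (pathGraph n).Adj :=
  fun _ _ => decidable_of_iff' _ pathGraph_adj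

def c5Cone (s : Fin 5 → Bool) : SimpleGraph (Option (Fin 5)) where
  Adj
    | some i, some j => (cycleGraph 5).Adj i j
    | none, some j | some j, none => s j
    | none, none => False
  symm := ⟨by
    rintro (_ | i) (_ | j) h
    all_goals first | exact h | exact h.symm⟩
  loopless := ⟨by
    rintro (_ | i) h
    all_goals first | exact h.elim | exact (cycleGraph 5).loopless.irrefl i h⟩

instance (s : Fin 5 → Bool) : DecidableRel (c5Cone s).Adj
  | some i, some j => inferInstanceAs (Decidable ((cycleGraph 5).Adj i j))
  | none, some j | some j, none => inferInstanceAs (Decidable (s j = true))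
  | none, none => inferInstanceAs (Decidable False)

/-- The pattern on a `C₅` of a vertex that could join the class of its `i`-th vertex in a
blowup. -/
def IsClonePattern (s : Fin 5 → Bool) (i : Fin 5) : Prop :=
  s (i + 1) ∧ s (i + 4) ∧ ¬ s (i + 2) ∧ ¬ s (i + 3)

instance (s : Fin 5 → Bool) (i : Fin 5) : Decidable (IsClonePattern s i) := by
  unfold IsClonePattern; infer_instance

def IsAdmissiblePattern (s : Fin 5 → Bool) : Prop :=
  (∀ j, s j = s 0) ∨ ∃ i, IsClonePattern s i

instance (s : Fin 5 → Bool) : Decidable (IsAdmissiblePattern s) := by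
  unfold IsAdmissiblePattern; infer_instance

theorem IsClonePattern.unique :
    ∀ {s : Fin 5 → Bool} {i j : Fin 5}, IsClonePattern s i → IsClonePattern s j → i = j := by
  decide

theorem IsClonePattern.eq_true_iff_adj : ∀ {s : Fin 5 → Bool} {i j : Fin 5},
    IsClonePattern s i → j ≠ i → (s j = true ↔ (cycleGraph 5).Adj i j) := by
  decide

theorem not_isClonePattern_of_forall_eq :
    ∀ {s : Fin 5 → Bool}, (∀ j, s j = s 0) → ∀ i, ¬ IsClonePattern s i := by
  decide

theorem IsAdmissiblePattern.eq_or_isClonePattern_of_update : ∀ {s : Fin 5 → Bool} {j : Fin 5}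
    {b : Bool}, IsAdmissiblePattern s → IsAdmissiblePattern (update s j b) →
    b = s j ∨ IsClonePattern s j := by
  decide

/-- Up to rotation the inadmissible patterns are `{k}` and `{k, k+1}`, which close an induced
`P₅` with the cycle, and `{k, k+1, k+3}` and all but `k`, which close a house. -/
def forbiddenWitnesses (k : Fin 5) : List (Fin 5 → Option (Fin 5)) :=
  [![none, some k, some (k + 1), some (k + 2), some (k + 3)],
   ![none, some (k + 1), some (k + 2), some (k + 3), some (k + 4)],
   ![none, some (k + 2), some k, some (k + 3), some (k + 1)],
   ![none, some k, some (k + 2), some (k + 4), some (k + 1)]]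

theorem exists_forbiddenWitness : ∀ s : Fin 5 → Bool, ¬ IsAdmissiblePattern s →
    ∃ k, ∃ f ∈ forbiddenWitnesses k, Injective f ∧
      ((∀ a b, (c5Cone s).Adj (f a) (f b) ↔ (pathGraph 5).Adj a b) ∨
        (∀ a b, (c5Cone s).Adj (f a) (f b) ↔ (pathGraph 5)ᶜ.Adj a b)) := by
  decide

theorem nonempty_embedding_c5Cone_of_not_isAdmissiblePattern {s : Fin 5 → Bool}
    (hs : ¬ IsAdmissiblePattern s) :
    Nonempty (pathGraph 5 ↪g c5Cone s) ∨ Nonempty ((pathGraph 5)ᶜ ↪g c5Cone s) := by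
  obtain ⟨-, f, -, hf, hP5 | hhouse⟩ := exists_forbiddenWitness s hs
  · exact Or.inl ⟨⟨⟨f, hf⟩, hP5 _ _⟩⟩
  · exact Or.inr ⟨⟨⟨f, hf⟩, hhouse _ _⟩⟩

def nbrPattern (G : SimpleGraph V) [DecidableRel G.Adj] (v : V) (c : Fin 5 → V) :
    Fin 5 → Bool :=
  fun j => G.Adj v (c j)

section Pattern

variable [DecidableRel G.Adj]

def c5ConeEmbedding (c : cycleGraph 5 ↪g G) {v : V} (hv : v ∉ range c) :
    c5Cone (G.nbrPattern v c) ↪g G where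
  toFun o := o.elim v c
  inj' := by
    rintro (_ | i) (_ | j) h
    · rfl
    · exact (hv ⟨j, h.symm⟩).elim
    · exact (hv ⟨i, h⟩).elim
    · exact congrArg some (c.injective h)
  map_rel_iff' := by
    rintro (_ | i) (_ | j)
    · simp [c5Cone]
    · show G.Adj v (c j) ↔ _
      simp [c5Cone, nbrPattern]
    · show G.Adj (c i) v ↔ _
      simp [c5Cone, nbrPattern, G.adj_comm (c i)]
    · exact c.map_rel_iff

theorem isAdmissiblePattern_nbrPattern (h1 : G.IndFree (pathGraph 5))
    (h2 : G.IndFree (pathGraph 5)ᶜ) (c : cycleGraph 5 ↪g G) {v : V} (hv : v ∉ range c) :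
    IsAdmissiblePattern (G.nbrPattern v c) := by
  by_contra hs
  obtain ⟨⟨e⟩⟩ | ⟨⟨e⟩⟩ := nonempty_embedding_c5Cone_of_not_isAdmissiblePattern hs
  · exact h1.false ((c5ConeEmbedding c hv).comp e)
  · exact h2.false ((c5ConeEmbedding c hv).comp e)

end Pattern

structure IsC5Blowup (G : SimpleGraph V) (B : Fin 5 → Set V) : Prop where
  nonempty : ∀ i, (B i).Nonempty
  disjoint : ∀ ⦃i j⦄, i ≠ j → Disjoint (B i) (B j)
  adj_iff : ∀ ⦃i j⦄, i ≠ j → ∀ x ∈ B i, ∀ y ∈ B j, (G.Adj x y ↔ (cycleGraph 5).Adj i j)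

namespace IsC5Blowup

variable {B : Fin 5 → Set V}

theorem of_embedding (c : cycleGraph 5 ↪g G) : G.IsC5Blowup fun i => {c i} where
  nonempty _ := singleton_nonempty _
  disjoint _ _ hij := disjoint_singleton.2 (c.injective.ne hij)
  adj_iff _ _ _ := by
    rintro _ rfl _ rfl
    exact c.map_rel_iff

def transversal (hB : G.IsC5Blowup B) (x : Fin 5 → V) (hx : ∀ i, x i ∈ B i) :
    cycleGraph 5 ↪g G where
  toFun := x
  inj' i j h := by
    by_contra hij
    exact Set.disjoint_left.1 (hB.disjoint hij) (hx i) (by rw [h]; exact hx j)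
  map_rel_iff' {i j} := by
    rcases eq_or_ne i j with rfl | hij
    · exact iff_of_false (G.loopless.irrefl _) ((cycleGraph 5).loopless.irrefl _)
    · exact hB.adj_iff hij _ (hx i) _ (hx j)

section Pattern

variable [DecidableRel G.Adj]

theorem isAdmissiblePattern_nbrPattern (h1 : G.IndFree (pathGraph 5))
    (h2 : G.IndFree (pathGraph 5)ᶜ) (hB : G.IsC5Blowup B) {x : Fin 5 → V}
    (hx : ∀ i, x i ∈ B i) {v : V} (hv : v ∉ ⋃ i, B i) :
    IsAdmissiblePattern (G.nbrPattern v x) := by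
  refine SimpleGraph.isAdmissiblePattern_nbrPattern h1 h2 (hB.transversal x hx) ?_
  rintro ⟨i, rfl⟩
  exact hv (mem_iUnion.2 ⟨i, hx i⟩)

/-- Swapping `y` into the transversal `x` changes the pattern of `v` at `j` only. -/
theorem adj_iff_or_isClonePattern (h1 : G.IndFree (pathGraph 5))
    (h2 : G.IndFree (pathGraph 5)ᶜ) (hB : G.IsC5Blowup B) {x : Fin 5 → V}
    (hx : ∀ i, x i ∈ B i) {v : V} (hv : v ∉ ⋃ i, B i) {j : Fin 5} {y : V} (hy : y ∈ B j) :
    (G.Adj v y ↔ G.Adj v (x j)) ∨ IsClonePattern (G.nbrPattern v x) j := by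
  have hx' : ∀ i, update x j y i ∈ B i := by
    intro i
    rcases eq_or_ne i j with rfl | hij
    · simpa using hy
    · simpa [hij] using hx i
  have hupdate : G.nbrPattern v (update x j y) = update (G.nbrPattern v x) j (G.Adj v y) := by
    funext i
    exact apply_update (fun _ z => decide (G.Adj v z)) x j y i
  have hadm := hB.isAdmissiblePattern_nbrPattern h1 h2 hx' hv
  rw [hupdate] at hadm
  refine (IsAdmissiblePattern.eq_or_isClonePattern_of_update
    (hB.isAdmissiblePattern_nbrPattern h1 h2 hx hv) hadm).imp (fun h => ?_) id
  simpa [nbrPattern] using h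

end Pattern

theorem update_insert (hB : G.IsC5Blowup B) {v : V} (hv : v ∉ ⋃ i, B i) {i : Fin 5}
    (hvi : ∀ j, j ≠ i → ∀ y ∈ B j, (G.Adj v y ↔ (cycleGraph 5).Adj i j)) :
    G.IsC5Blowup (update B i (insert v (B i))) := by
  have hvB : ∀ j, v ∉ B j := fun j hj => hv (mem_iUnion.2 ⟨j, hj⟩)
  have hmem : ∀ j z, z ∈ update B i (insert v (B i)) j ↔ z ∈ B j ∨ (j = i ∧ z = v) := by
    intro j z
    rcases eq_or_ne j i with rfl | hji
    · simp [or_comm]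
    · simp [hji]
  refine ⟨fun j => ?_, fun j k hjk => ?_, fun j k hjk x hx y hy => ?_⟩
  · exact (hB.nonempty j).mono fun z hz => (hmem j z).2 (Or.inl hz)
  · refine Set.disjoint_left.2 fun z hzj hzk => ?_
    rcases (hmem j z).1 hzj, (hmem k z).1 hzk with ⟨hj | ⟨rfl, hzv⟩, hk | ⟨rfl, hzv⟩⟩
    · exact Set.disjoint_left.1 (hB.disjoint hjk) hj hk
    · exact hvB j (hzv ▸ hj)
    · exact hvB k (hzv ▸ hk)
    · exact hjk rfl
  · rcases (hmem j x).1 hx, (hmem k y).1 hy with ⟨hxB | ⟨rfl, rfl⟩, hyB | ⟨rfl, rfl⟩⟩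
    · exact hB.adj_iff hjk x hxB y hyB
    · rw [G.adj_comm, (cycleGraph 5).adj_comm]
      exact hvi j hjk x hxB
    · exact hvi k hjk.symm y hyB
    · exact (hjk rfl).elim

theorem isModule_of_iUnion_eq_univ (hB : G.IsC5Blowup B) (hcover : ⋃ j, B j = univ)
    (i : Fin 5) : G.IsModule (B i) := by
  intro z hz
  obtain ⟨j, hj⟩ := mem_iUnion.1 (hcover ▸ mem_univ z)
  have hji : j ≠ i := fun h => hz (h ▸ hj)
  by_cases hadj : (cycleGraph 5).Adj j i
  · exact Or.inl fun y hy => (hB.adj_iff hji z hj y hy).2 hadj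
  · exact Or.inr fun y hy => mt (hB.adj_iff hji z hj y hy).1 hadj

end IsC5Blowup

def IsMaximalC5Blowup (G : SimpleGraph V) (B : Fin 5 → Set V) : Prop :=
  G.IsC5Blowup B ∧ ∀ v ∉ ⋃ i, B i, ∀ i, ¬ G.IsC5Blowup (update B i (insert v (B i)))

theorem exists_isMaximalC5Blowup [Finite V] (c : cycleGraph 5 ↪g G) :
    ∃ B, G.IsMaximalC5Blowup B := by
  obtain ⟨B, hB, hmax⟩ := exists_max_image {B | G.IsC5Blowup B} (fun B => (⋃ i, B i).ncard)
    (toFinite _) ⟨_, IsC5Blowup.of_embedding c⟩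
  refine ⟨B, hB, fun v hv i hB' => ?_⟩
  have hle := hmax _ hB'
  rw [iUnion_update_insert, ncard_insert_of_notMem hv (toFinite _)] at hle
  omega

theorem IsMaximalC5Blowup.isModule_iUnion (h1 : G.IndFree (pathGraph 5))
    (h2 : G.IndFree (pathGraph 5)ᶜ) {B : Fin 5 → Set V} (hB : G.IsMaximalC5Blowup B) :
    G.IsModule (⋃ i, B i) := by
  classical
  obtain ⟨hB, hmax⟩ := hB
  intro v hv
  choose x hx using hB.nonempty
  have hadm := hB.isAdmissiblePattern_nbrPattern h1 h2 hx hv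
  set s := G.nbrPattern v x with hs
  have hhom : ∀ j, ¬ IsClonePattern s j → ∀ y ∈ B j, (G.Adj v y ↔ s j = true) := by
    intro j hj y hy
    simpa [hs, nbrPattern] using (hB.adj_iff_or_isClonePattern h1 h2 hx hv hy).resolve_right hj
  rcases hadm with hconst | ⟨i, hi⟩
  · have hall : ∀ y ∈ ⋃ j, B j, (G.Adj v y ↔ s 0 = true) := by
      intro y hy
      obtain ⟨j, hj⟩ := mem_iUnion.1 hy
      rw [hhom j (not_isClonePattern_of_forall_eq hconst j) y hj, hconst j]
    by_cases hs0 : s 0 = true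
    · exact Or.inl fun y hy => (hall y hy).2 hs0
    · exact Or.inr fun y hy h => hs0 ((hall y hy).1 h)
  · refine (hmax v hv i (hB.update_insert hv fun j hji y hy => ?_)).elim
    rw [hhom j (fun hj => hji (hj.unique hi)) y hy]
    exact hi.eq_true_iff_adj hji

theorem IsPrime.eq_univ_of_isModule [Fintype V] (hp : G.IsPrime) {M : Set V}
    (hM : G.IsModule M) {x y : V} (hx : x ∈ M) (hy : y ∈ M) (hxy : x ≠ y) : M = univ := by
  rcases hp.2 M hM with rfl | ⟨z, rfl⟩ | huniv
  · exact (notMem_empty x hx).elim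
  · exact (hxy (hx.trans hy.symm)).elim
  · exact huniv

theorem IsC5Blowup.nonempty_iso_of_isPrime [Fintype V] {B : Fin 5 → Set V}
    (hB : G.IsC5Blowup B) (hp : G.IsPrime) (hM : G.IsModule (⋃ i, B i)) :
    Nonempty (G ≃g cycleGraph 5) := by
  choose x hx using hB.nonempty
  have hcover : ⋃ i, B i = univ := hp.eq_univ_of_isModule hM (mem_iUnion.2 ⟨0, hx 0⟩)
    (mem_iUnion.2 ⟨1, hx 1⟩) ((hB.transversal x hx).injective.ne (by decide))
  have hsub : ∀ i, (B i).Subsingleton := by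
    intro i y hy z hz
    by_contra hyz
    have huniv := hp.eq_univ_of_isModule (hB.isModule_of_iUnion_eq_univ hcover i) hy hz hyz
    exact Set.disjoint_left.1 (hB.disjoint (by simp : i ≠ i + 1))
      (by rw [huniv]; exact mem_univ _) (hx (i + 1))
  have hsurj : Surjective (hB.transversal x hx) := by
    intro z
    obtain ⟨i, hi⟩ := mem_iUnion.1 (hcover ▸ mem_univ z)
    exact ⟨i, hsub i (hx i) hi⟩
  exact ⟨(RelIso.ofSurjective (hB.transversal x hx) hsurj).symm⟩

end SimpleGraph

open SimpleGraph in
theorem stmt6 {V : Type*} [Fintype V] (G : SimpleGraph V) (hp : G.IsPrime)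
    (h1 : G.IndFree (pathGraph 5)) (h2 : G.IndFree (pathGraph 5)ᶜ) :
    Nonempty (G ≃g cycleGraph 5) ∨ G.IndFree (cycleGraph 5) := by
  refine or_iff_not_imp_right.2 fun hC5 => ?_
  obtain ⟨c⟩ := not_isEmpty_iff.1 hC5
  obtain ⟨B, hB⟩ := exists_isMaximalC5Blowup c
  exact hB.1.nonempty_iso_of_isPrime hp (hB.isModule_iUnion h1 h2)
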